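/- arXiv:math/0512123 — 3 statements merged into one kernel-verified Lean document; each statement's English description precedes it below -/
import Mathlib

section
/- Let a_M ∈ L¹(Ω̃) and let a(x,y) be its two-scale continuous extension with parameter ε̄ > 0. Then for every ε > 0 with ε ≠ ε̄, the function x ↦ a(x, x/ε) belongs to L¹(Ω) with ‖a(·,·/ε)‖_{L¹(Ω)} ≤ ‖a_M‖_{L¹(Ω̃)} |ε̄−ε|^d D^d / ε̄^{2d}, where D = 2(R + √d·Δ), 2R is the diameter of Ω and Δ = εε̄/|ε̄−ε|. -/
open MeasureTheory Filter Topology Function Matrix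

noncomputable section

/-- The unit cube `Y = (0,1)^d`. -/
def unitCube (d : ℕ) : Set (Fin d → ℝ) := Set.univ.pi fun _ => Set.Ioo (0:ℝ) 1

/-- The axis-aligned closed cube of side `r` centered at `c`. -/
def cube {d : ℕ} (c : Fin d → ℝ) (r : ℝ) : Set (Fin d → ℝ) := {z | ∀ k, |z k - c k| ≤ r / 2}

/-- `f(x, ·)` is `Y`-periodic (period `1` in each coordinate direction). -/
def YPeriodic {d : ℕ} (f : (Fin d → ℝ) → (Fin d → ℝ) → ℝ) : Prop :=
  ∀ (x y : Fin d → ℝ) (m : Fin d → ℤ), f x (y + fun i => (m i : ℝ)) = f x y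

/-- Test functions `ψ ∈ D(Ω × Y)`: `Y`-periodic in `y`, and on `Ω × Y` given by a smooth
compactly supported function with support inside `Ω × Y`. -/
def IsTestFunction {d : ℕ} (Ω : Set (Fin d → ℝ)) (ψ : (Fin d → ℝ) → (Fin d → ℝ) → ℝ) : Prop :=
  YPeriodic ψ ∧ ∃ ψ₀ : (Fin d → ℝ) × (Fin d → ℝ) → ℝ,
    ContDiff ℝ (⊤ : ℕ∞) ψ₀ ∧ HasCompactSupport ψ₀ ∧
    tsupport ψ₀ ⊆ Ω ×ˢ unitCube d ∧
    ∀ x y, y ∈ unitCube d → ψ x y = ψ₀ (x, y)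

/-- Two-scale convergence of `u_ε` (indexed along a sequence `ε n → 0`) to `u₀ ∈ L²(Ω×Y)`:
boundedness in `L²(Ω)` together with convergence against every test function in `D(Ω×Y)`. -/
def TwoScale {d : ℕ} (Ω : Set (Fin d → ℝ)) (ε : ℕ → ℝ)
    (u : ℕ → (Fin d → ℝ) → ℝ) (u₀ : (Fin d → ℝ) → (Fin d → ℝ) → ℝ) : Prop :=
  (∃ C : ℝ, ∀ n, ∫ x in Ω, (u n x) ^ 2 ≤ C) ∧
  ∀ ψ, IsTestFunction Ω ψ →
    Tendsto (fun n => ∫ x in Ω, u n x * ψ x ((ε n)⁻¹ • x)) atTop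
      (𝓝 (∫ x in Ω, ∫ y in unitCube d, u₀ x y * ψ x y))

/-- `φ` is an admissible test function: one may pass to the two-scale limit against it. -/
def Admissible {d : ℕ} (Ω : Set (Fin d → ℝ)) (ε : ℕ → ℝ)
    (φ : (Fin d → ℝ) → (Fin d → ℝ) → ℝ) : Prop :=
  ∀ u u₀, TwoScale Ω ε u u₀ →
    Tendsto (fun n => ∫ x in Ω, u n x * φ x ((ε n)⁻¹ • x)) atTop
      (𝓝 (∫ x in Ω, ∫ y in unitCube d, u₀ x y * φ x y))

/-- The two-scale Continuous Extension of `a_M` with parameter `ε̄ = eb`: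
`a(x,y) = ã(x, ε̄ y)` where `ã(x,·) = a_M` on the `ε̄`-cube `W(x)` centered at `x`,
extended `ε̄`-periodically. -/
def contExt {d : ℕ} (aM : (Fin d → ℝ) → ℝ) (eb : ℝ) (x y : Fin d → ℝ) : ℝ :=
  aM fun k => x k + eb * (Int.fract (y k - x k / eb + 1/2) - 1/2)

/-- The two-scale Discrete Extension of `a_M` associated to a partition `Ω = ⋃ j, Ωp j`
with `ε̄`-cubes `W_j` centered at `xh j`. -/
def discExt {d : ℕ} (aM : (Fin d → ℝ) → ℝ) (eb : ℝ) {N : ℕ} (Ωp : Fin N → Set (Fin d → ℝ))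
    (xh : Fin N → (Fin d → ℝ)) (x y : Fin d → ℝ) : ℝ :=
  ∑ j, (Ωp j).indicator (fun _ => contExt aM eb (xh j) y) x

/-- `ε̄`-periodicity of a function on `ℝ^d`. -/
def perZ {d : ℕ} (eb : ℝ) (f : (Fin d → ℝ) → ℝ) : Prop :=
  ∀ (z : Fin d → ℝ) (m : Fin d → ℤ), f (z + eb • fun i => (m i : ℝ)) = f z

/-- `g` is the weak gradient of `f`. -/
def IsWeakGrad {d : ℕ} (f : (Fin d → ℝ) → ℝ) (g : (Fin d → ℝ) → (Fin d → ℝ)) : Prop :=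
  LocallyIntegrable f volume ∧ (∀ k, LocallyIntegrable (fun z => g z k) volume) ∧
  ∀ ψ : (Fin d → ℝ) → ℝ, ContDiff ℝ (⊤ : ℕ∞) ψ → HasCompactSupport ψ → ∀ k : Fin d,
    ∫ z, f z * fderiv ℝ ψ z (Pi.single k 1) = - ∫ z, g z k * ψ z


private lemma lemA {d : ℕ} (f : (Fin d → ℝ) → ℝ) (T : Set (Fin d → ℝ)) (hT : MeasurableSet T)
    (hf : IntegrableOn f T) {s : ℝ} (hs : 0 < s) (v : Fin d → ℝ) :
    IntegrableOn (fun x => f (s • x + v)) ((fun x => s • x + v) ⁻¹' T) ∧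
    ∫ x in (fun x => s • x + v) ⁻¹' T, |f (s • x + v)| = s⁻¹ ^ d * ∫ z in T, |f z| := by
  have hLmeas : Measurable (fun x : Fin d → ℝ => s • x + v) :=
    ((measurable_const_smul s : Measurable fun x : Fin d → ℝ => s • x)).add_const v
  set k : ENNReal := ENNReal.ofReal (s⁻¹ ^ d) with hk
  have hfin : Module.finrank ℝ (Fin d → ℝ) = d := by
    rw [Module.finrank_fintype_fun_eq_card, Fintype.card_fin]
  have hmap : Measure.map (fun x : Fin d → ℝ => s • x + v) (volume : Measure (Fin d → ℝ))
      = k • volume := by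
    have h1 : (fun x : Fin d → ℝ => s • x + v)
        = (fun x : Fin d → ℝ => x + v) ∘ (fun x : Fin d → ℝ => s • x) := rfl
    rw [h1, ← Measure.map_map (measurable_add_const v) (measurable_const_smul s : Measurable fun x : Fin d → ℝ => s • x),
      Measure.map_addHaar_smul volume (ne_of_gt hs), Measure.map_smul,
      map_add_right_eq_self volume v, hfin]
    rw [hk, inv_pow]
    congr 1
    rw [abs_of_nonneg (by positivity)]
  have hmapr : Measure.map (fun x : Fin d → ℝ => s • x + v)
      (volume.restrict ((fun x : Fin d → ℝ => s • x + v) ⁻¹' T)) = k • volume.restrict T := by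
    rw [← Measure.restrict_map hLmeas hT, hmap, Measure.restrict_smul]
  have hkne : k ≠ ⊤ := ENNReal.ofReal_ne_top
  have hint : Integrable f (k • volume.restrict T) := hf.smul_measure hkne
  constructor
  · have := (integrable_map_measure (by rw [hmapr]; exact hint.aestronglyMeasurable)
      hLmeas.aemeasurable).mp (by rw [hmapr]; exact hint)
    exact this
  · have habs : Integrable (fun z => |f z|) (k • volume.restrict T) := hint.abs
    calc ∫ x in (fun x : Fin d → ℝ => s • x + v) ⁻¹' T, |f (s • x + v)|
        = ∫ z, |f z| ∂(Measure.map (fun x : Fin d → ℝ => s • x + v)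
            (volume.restrict ((fun x : Fin d → ℝ => s • x + v) ⁻¹' T))) := by
          rw [integral_map hLmeas.aemeasurable
            (by rw [hmapr]; exact habs.aestronglyMeasurable)]
      _ = ∫ z, |f z| ∂(k • volume.restrict T) := by rw [hmapr]
      _ = s⁻¹ ^ d * ∫ z in T, |f z| := by
          rw [integral_smul_measure, hk, ENNReal.toReal_ofReal (by positivity), smul_eq_mul]

/-- For `a_M ∈ L¹(Ω̃)` and its two-scale Continuous Extension `a` with parameter `ε̄`,
for every `ε > 0`, `ε ≠ ε̄`, the trace `x ↦ a(x, x/ε)` is in `L¹(Ω)` with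
`‖a(·,·/ε)‖_{L¹(Ω)} ≤ ‖a_M‖_{L¹(Ω̃)} |ε̄−ε|^d D^d / ε̄^{2d}`, where `D = 2(R + √d Δ)`,
`2R` is the diameter of `Ω` and `Δ = ε ε̄ / |ε̄ − ε|`. -/
theorem statement10 {d : ℕ} (Ωt Ω : Set (Fin d → ℝ))
    (hΩt : Bornology.IsBounded Ωt) (hΩ : Bornology.IsBounded Ω)
    (aM : (Fin d → ℝ) → ℝ) (haM : IntegrableOn aM Ωt)
    (eb : ℝ) (heb : 0 < eb)
    (hW : ∀ x ∈ Ω, cube x eb ⊆ Ωt)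
    (R : ℝ) (hR : Metric.diam Ω = 2 * R)
    (ε : ℝ) (hε : 0 < ε) (hne : ε ≠ eb) :
    IntegrableOn (fun x => contExt aM eb x (ε⁻¹ • x)) Ω ∧
    ∫ x in Ω, |contExt aM eb x (ε⁻¹ • x)| ≤
      (∫ z in Ωt, |aM z|) * |eb - ε| ^ d *
        (2 * (R + Real.sqrt d * (ε * eb / |eb - ε|))) ^ d / eb ^ (2 * d) := by
  classical
  have hR0 : 0 ≤ R := by
    have h := Metric.diam_nonneg (s := Ω)
    rw [hR] at h; linarith
  have hInt0 : 0 ≤ ∫ z in Ωt, |aM z| := integral_nonneg fun z => abs_nonneg _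
  have hsd0 : 0 ≤ Real.sqrt d := Real.sqrt_nonneg _
  have hΔ0 : 0 ≤ ε * eb / |eb - ε| := div_nonneg (by positivity) (abs_nonneg _)
  have hRHS0 : 0 ≤ (∫ z in Ωt, |aM z|) * |eb - ε| ^ d *
        (2 * (R + Real.sqrt d * (ε * eb / |eb - ε|))) ^ d / eb ^ (2 * d) := by
    apply div_nonneg _ (by positivity)
    apply mul_nonneg (mul_nonneg hInt0 (by positivity))
    apply pow_nonneg
    nlinarith
  rcases Set.eq_empty_or_nonempty Ω with hemp | ⟨x₀, hx₀⟩
  · constructor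
    · rw [hemp]; exact integrableOn_empty
    · rw [hemp]
      simpa [Measure.restrict_empty] using hRHS0
  -- setup
  have hεne : ε ≠ 0 := ne_of_gt hε
  have hebne : eb ≠ 0 := ne_of_gt heb
  have hA : 0 < |eb - ε| := abs_pos.mpr (sub_ne_zero.mpr (Ne.symm hne))
  set c : ℝ := 1/ε - 1/eb with hcdef
  have hcval : c = (eb - ε)/(ε * eb) := by rw [hcdef]; field_simp
  have hcabs : |c| = |eb - ε| / (ε * eb) := by
    rw [hcval, abs_div, abs_of_pos (show (0:ℝ) < ε*eb by positivity)]
  set s : ℝ := eb / ε with hsdef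
  have hs : 0 < s := div_pos heb hε
  have hs1 : s = 1 + eb * c := by rw [hsdef, hcdef]; field_simp; ring
  set m : (Fin d → ℝ) → Fin d → ℤ := fun x k => ⌊c * x k + 1/2⌋ with hmdef
  set g : (Fin d → ℝ) → ℝ := fun x => contExt aM eb x (ε⁻¹ • x) with hgdef
  set L : (Fin d → ℤ) → (Fin d → ℝ) → (Fin d → ℝ) :=
    fun I x => s • x + fun k => -(eb * I k) with hLdef
  have hLm : ∀ x : Fin d → ℝ,
      L (m x) x = fun k => x k + eb * (Int.fract (c * x k + 1/2) - 1/2) := by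
    intro x; funext k
    show s * x k + -(eb * ((⌊c * x k + 1/2⌋ : ℤ) : ℝ)) = _
    rw [Int.fract, hs1]; push_cast; ring
  have hgφ : ∀ x, g x = aM (L (m x) x) := by
    intro x
    rw [hLm x, hgdef]
    show contExt aM eb x (ε⁻¹ • x) = _
    unfold contExt
    congr 1; funext k
    have h1 : (ε⁻¹ • x) k - x k / eb + 1/2 = c * x k + 1/2 := by
      simp only [Pi.smul_apply, smul_eq_mul, hcdef]; ring
    rw [h1]
  have hgT : ∀ x ∈ Ω, L (m x) x ∈ Ωt := by
    intro x hx
    apply hW x hx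
    intro k
    rw [hLm x]
    have h1 : 0 ≤ Int.fract (c * x k + 1/2) := Int.fract_nonneg _
    have h2 : Int.fract (c * x k + 1/2) < 1 := Int.fract_lt_one _
    have h3 : x k + eb * (Int.fract (c * x k + 1/2) - 1/2) - x k
        = eb * (Int.fract (c * x k + 1/2) - 1/2) := by ring
    rw [h3, abs_mul, abs_of_pos heb]
    have h4 : |Int.fract (c * x k + 1/2) - 1/2| ≤ 1/2 :=
      abs_le.mpr ⟨by linarith, by linarith⟩
    calc eb * |Int.fract (c * x k + 1/2) - 1/2| ≤ eb * (1/2) :=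
          mul_le_mul_of_nonneg_left h4 heb.le
      _ = eb / 2 := by ring
  -- cells
  set cell : (Fin d → ℤ) → Set (Fin d → ℝ) := fun I => {x | m x = I} with hcelldef
  have hcellmeas : ∀ I, MeasurableSet (cell I) := by
    intro I
    have h1 : cell I = ⋂ k, (fun x : Fin d → ℝ => ⌊c * x k + 1/2⌋) ⁻¹' {I k} := by
      ext x
      simp only [hcelldef, Set.mem_setOf_eq, Set.mem_iInter, Set.mem_preimage,
        Set.mem_singleton_iff, funext_iff]
      exact Iff.rfl
    rw [h1]
    refine MeasurableSet.iInter fun k => ?_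
    have hmf : Measurable fun x : Fin d → ℝ => ⌊c * x k + 1/2⌋ :=
      Measurable.floor (by fun_prop)
    exact hmf (measurableSet_singleton (I k))
  -- measurable hull of Ωt
  set T := toMeasurable volume Ωt with hTdef
  have hTmeas : MeasurableSet T := measurableSet_toMeasurable _ _
  have hΩtT : Ωt ⊆ T := subset_toMeasurable _ _
  have hres : volume.restrict T = volume.restrict Ωt :=
    Measure.restrict_toMeasurable hΩt.measure_lt_top.ne
  have haMT : IntegrableOn aM T := by rw [IntegrableOn, hres]; exact haM
  have hintT : ∫ z in T, |aM z| = ∫ z in Ωt, |aM z| := by rw [hres]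
  -- coordinate center of Ω
  obtain ⟨M, hM⟩ : ∃ M, ∀ x ∈ Ω, ‖x‖ ≤ M := by
    obtain ⟨rr, hrr⟩ := hΩ.subset_closedBall 0
    exact ⟨rr, fun x hx => by simpa [mem_closedBall_zero_iff] using hrr hx⟩
  set A : Fin d → Set ℝ := fun k => (fun x : Fin d → ℝ => x k) '' Ω with hAdef
  have hAne : ∀ k, (A k).Nonempty := fun k => ⟨x₀ k, ⟨x₀, hx₀, rfl⟩⟩
  have hAub : ∀ k, BddAbove (A k) := by
    rintro k
    refine ⟨M, ?_⟩
    rintro t ⟨x, hx, rfl⟩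
    exact le_trans (le_abs_self _) (le_trans (norm_le_pi_norm x k) (hM x hx))
  have hAlb : ∀ k, BddBelow (A k) := by
    rintro k
    refine ⟨-M, ?_⟩
    rintro t ⟨x, hx, rfl⟩
    have := le_trans (norm_le_pi_norm x k) (hM x hx)
    rw [Real.norm_eq_abs] at this
    linarith [abs_le.mp this |>.1]
  set b : Fin d → ℝ := fun k => (sInf (A k) + sSup (A k)) / 2 with hbdef
  have hb : ∀ x ∈ Ω, ∀ k, |x k - b k| ≤ R := by
    intro x hx k
    have hmem : x k ∈ A k := ⟨x, hx, rfl⟩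
    have hup : x k ≤ sSup (A k) := le_csSup (hAub k) hmem
    have hlow : sInf (A k) ≤ x k := csInf_le (hAlb k) hmem
    have hdiam : ∀ t' ∈ A k, |x k - t'| ≤ 2 * R := by
      rintro t' ⟨x', hx', rfl⟩
      calc |x k - x' k| = dist (x k) (x' k) := (Real.dist_eq _ _).symm
        _ ≤ dist x x' := dist_le_pi_dist x x' k
        _ ≤ Metric.diam Ω := Metric.dist_le_diam_of_mem hΩ hx hx'
        _ = 2 * R := hR
    have hsup2 : sSup (A k) ≤ x k + 2 * R :=
      csSup_le (hAne k) fun t' ht' => by linarith [abs_le.mp (hdiam t' ht') |>.1]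
    have hinf2 : x k - 2 * R ≤ sInf (A k) :=
      le_csInf (hAne k) fun t' ht' => by linarith [abs_le.mp (hdiam t' ht') |>.2]
    rw [hbdef]
    rw [abs_le]
    constructor <;> [skip; skip] <;> simp only [] <;> nlinarith
  -- index set
  set r : ℝ := |c| * R with hrdef
  have hr0 : 0 ≤ r := mul_nonneg (abs_nonneg _) hR0
  set u : Fin d → ℝ := fun k => c * b k + 1/2 with hudef
  set 𝓘 : Finset (Fin d → ℤ) :=
    Fintype.piFinset (fun k => Finset.Icc ⌊u k - r⌋ ⌊u k + r⌋) with hIdef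
  have hmem : ∀ x ∈ Ω, m x ∈ 𝓘 := by
    intro x hx
    rw [hIdef, Fintype.mem_piFinset]
    intro k
    rw [Finset.mem_Icc]
    have h1 : |c * x k - c * b k| ≤ r := by
      rw [← mul_sub, abs_mul, hrdef]
      exact mul_le_mul_of_nonneg_left (hb x hx k) (abs_nonneg c)
    obtain ⟨h2, h3⟩ := abs_le.mp h1
    have hu : u k = c * b k + 1/2 := rfl
    have hle1 : u k - r ≤ c * x k + 1/2 := by
      rw [hu]; clear_value c r u b; linarith
    have hle2 : c * x k + 1/2 ≤ u k + r := by
      rw [hu]; clear_value c r u b; linarith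
    exact ⟨Int.floor_mono hle1, Int.floor_mono hle2⟩
  have hcard : ((𝓘.card : ℕ) : ℝ) ≤ (2*r + 2*Real.sqrt d)^d := by
    rw [hIdef, Fintype.card_piFinset]
    push_cast
    calc (∏ k : Fin d, ((Finset.Icc ⌊u k - r⌋ ⌊u k + r⌋).card : ℝ))
        ≤ ∏ _k : Fin d, (2*r + 2*Real.sqrt d) := by
          apply Finset.prod_le_prod (fun k _ => by positivity)
          intro k _
          have hd1 : (1:ℝ) ≤ Real.sqrt d := by
            rw [show (1:ℝ) = Real.sqrt 1 from Real.sqrt_one.symm]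
            apply Real.sqrt_le_sqrt
            have : 0 < d := Fin.pos k
            exact_mod_cast this
          have hcard1 : ((Finset.Icc ⌊u k - r⌋ ⌊u k + r⌋).card : ℝ) ≤ 2*r + 2 := by
            rw [Int.card_Icc]
            have h1 : ((⌊u k + r⌋ : ℤ) : ℝ) ≤ u k + r := Int.floor_le _
            have h2 : u k - r - 1 < ((⌊u k - r⌋ : ℤ) : ℝ) := Int.sub_one_lt_floor _
            rcases le_or_gt (⌊u k + r⌋ + 1 - ⌊u k - r⌋) 0 with h | h
            · rw [Int.toNat_of_nonpos h]
              simp only [Nat.cast_zero]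
              linarith
            · have h3 : (((⌊u k + r⌋ + 1 - ⌊u k - r⌋).toNat : ℤ) : ℝ)
                  = ((⌊u k + r⌋ + 1 - ⌊u k - r⌋ : ℤ) : ℝ) := by
                rw [Int.toNat_of_nonneg h.le]
              rw [show (((⌊u k + r⌋ + 1 - ⌊u k - r⌋).toNat : ℕ) : ℝ)
                  = (((⌊u k + r⌋ + 1 - ⌊u k - r⌋).toNat : ℤ) : ℝ) by push_cast; ring, h3]
              push_cast
              linarith
          linarith
      _ = (2*r + 2*Real.sqrt d)^d := by
          rw [Finset.prod_const, Finset.card_univ, Fintype.card_fin]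
  -- per-cell estimate
  have key : ∀ I : Fin d → ℤ, IntegrableOn g (cell I ∩ Ω) volume ∧
      ∫ x in cell I ∩ Ω, |g x| ≤ (ε/eb)^d * ∫ z in Ωt, |aM z| := by
    intro I
    set v : Fin d → ℝ := fun k => -(eb * I k) with hvdef
    obtain ⟨hInt, hEq⟩ := lemA aM T hTmeas haMT hs v
    set S : Set (Fin d → ℝ) :=
      cell I ∩ ((fun x : Fin d → ℝ => s • x + v) ⁻¹' T) with hSdef
    have hSmeas : MeasurableSet S :=
      (hcellmeas I).inter (hTmeas.preimage
        (((measurable_const_smul s : Measurable fun x : Fin d → ℝ => s • x)).add_const v))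
    have hsub : cell I ∩ Ω ⊆ S := by
      rintro x ⟨hxc, hxΩ⟩
      refine ⟨hxc, ?_⟩
      have hmx : m x = I := hxc
      have h1 : L (m x) x ∈ Ωt := hgT x hxΩ
      have h2 : L (m x) x = s • x + v := by rw [hmx]
      show s • x + v ∈ T
      rw [← h2]
      exact hΩtT h1
    have hgS : ∀ x ∈ S, g x = aM (s • x + v) := by
      intro x hx
      have hmx : m x = I := hx.1
      rw [hgφ x, hmx]
    have hIS : IntegrableOn g S := by
      refine (hInt.mono_set Set.inter_subset_right).congr_fun ?_ hSmeas
      intro x hx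
      exact (hgS x hx).symm
    constructor
    · exact hIS.mono_set hsub
    · have hnn1 : 0 ≤ᵐ[volume.restrict S] fun x => |g x| :=
        Eventually.of_forall fun x => abs_nonneg _
      have hnn2 : 0 ≤ᵐ[volume.restrict ((fun x : Fin d → ℝ => s • x + v) ⁻¹' T)]
          fun x => |aM (s • x + v)| := Eventually.of_forall fun x => abs_nonneg _
      calc ∫ x in cell I ∩ Ω, |g x|
          ≤ ∫ x in S, |g x| :=
            setIntegral_mono_set hIS.abs hnn1 (HasSubset.Subset.eventuallyLE hsub)
        _ = ∫ x in S, |aM (s • x + v)| :=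
            setIntegral_congr_fun hSmeas fun x hx => by rw [hgS x hx]
        _ ≤ ∫ x in (fun x : Fin d → ℝ => s • x + v) ⁻¹' T, |aM (s • x + v)| :=
            setIntegral_mono_set hInt.abs hnn2
              (HasSubset.Subset.eventuallyLE Set.inter_subset_right)
        _ = s⁻¹ ^ d * ∫ z in T, |aM z| := hEq
        _ = (ε/eb)^d * ∫ z in Ωt, |aM z| := by
            rw [hintT, hsdef, inv_div]
  -- covering
  set U : Set (Fin d → ℝ) := ⋃ I ∈ 𝓘, cell I with hUdef
  have hUmeas : MeasurableSet U :=
    MeasurableSet.biUnion 𝓘.countable_toSet fun I _ => hcellmeas I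
  have hΩU : Ω ⊆ U := by
    intro x hx
    exact Set.mem_biUnion (hmem x hx) rfl
  have hae : ∀ᵐ x ∂(volume.restrict Ω), x ∈ U := by
    rw [ae_iff]
    have h2 : Uᶜ ∩ Ω = ∅ := by
      rw [Set.eq_empty_iff_forall_notMem]
      rintro x ⟨hxc, hxΩ⟩
      exact hxc (hΩU hxΩ)
    have h1 : {x | ¬ x ∈ U} = Uᶜ := rfl
    rw [h1, Measure.restrict_apply hUmeas.compl, h2, measure_empty]
  have hresU : (volume.restrict Ω).restrict U = volume.restrict Ω :=
    Measure.restrict_eq_self_of_ae_mem hae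
  have hiUI : ∀ I ∈ 𝓘, IntegrableOn g (cell I) (volume.restrict Ω) := by
    intro I _
    rw [IntegrableOn, Measure.restrict_restrict (hcellmeas I)]
    exact (key I).1
  have hiU : IntegrableOn g U (volume.restrict Ω) := by
    rw [hUdef]
    exact integrableOn_finset_iUnion.mpr hiUI
  have hgint : Integrable g (volume.restrict Ω) := by rw [← hresU]; exact hiU
  have hdisj : (↑𝓘 : Set (Fin d → ℤ)).Pairwise (Disjoint on cell) := by
    intro I _ J _ hIJ
    rw [Function.onFun, Set.disjoint_left]
    intro x hxI hxJ
    have h1 : m x = I := hxI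
    have h2 : m x = J := hxJ
    exact hIJ (h1 ▸ h2)
  constructor
  · exact hgint
  · have hsum := integral_biUnion_finset (μ := volume.restrict Ω) (f := fun x => |g x|)
      𝓘 (fun I _ => hcellmeas I) hdisj (fun I hI => (hiUI I hI).abs)
    have hstep1 : ∫ x in Ω, |g x| = ∑ I ∈ 𝓘, ∫ x in cell I, |g x| ∂(volume.restrict Ω) := by
      rw [← hsum, ← hUdef]
      conv_lhs => rw [← hresU]
    have hstep2 : ∑ I ∈ 𝓘, ∫ x in cell I, |g x| ∂(volume.restrict Ω)
        ≤ ∑ _I ∈ 𝓘, (ε/eb)^d * ∫ z in Ωt, |aM z| := by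
      refine Finset.sum_le_sum fun I _ => ?_
      rw [Measure.restrict_restrict (hcellmeas I)]
      exact (key I).2
    have hC0 : 0 ≤ (ε/eb)^d * ∫ z in Ωt, |aM z| := by positivity
    have hstep3 : (𝓘.card : ℝ) * ((ε/eb)^d * ∫ z in Ωt, |aM z|)
        ≤ (2*r + 2*Real.sqrt d)^d * ((ε/eb)^d * ∫ z in Ωt, |aM z|) :=
      mul_le_mul_of_nonneg_right hcard hC0
    have hbase : (2*r + 2*Real.sqrt d) * (ε/eb)
        = |eb - ε| * (2*(R + Real.sqrt d * (ε*eb/|eb-ε|))) / eb^2 := by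
      rw [hrdef, hcabs]
      clear_value r u
      field_simp
    have hfinal : (2*r + 2*Real.sqrt d)^d * ((ε/eb)^d * ∫ z in Ωt, |aM z|)
        = (∫ z in Ωt, |aM z|) * |eb - ε| ^ d *
          (2 * (R + Real.sqrt d * (ε * eb / |eb - ε|))) ^ d / eb ^ (2 * d) := by
      rw [← mul_assoc, ← mul_pow, hbase, div_pow, mul_pow, pow_mul]
      ring
    calc ∫ x in Ω, |g x|
        = ∑ I ∈ 𝓘, ∫ x in cell I, |g x| ∂(volume.restrict Ω) := hstep1
      _ ≤ ∑ _I ∈ 𝓘, (ε/eb)^d * ∫ z in Ωt, |aM z| := hstep2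
      _ = (𝓘.card : ℝ) * ((ε/eb)^d * ∫ z in Ωt, |aM z|) := by
          rw [Finset.sum_const, nsmul_eq_mul]
      _ ≤ (2*r + 2*Real.sqrt d)^d * ((ε/eb)^d * ∫ z in Ωt, |aM z|) := hstep3
      _ = _ := hfinal

end
end

section
/- If a_M is Lebesgue measurable on Ω̃, then its two-scale continuous extension a(x,y) is Lebesgue measurable on Ω×Y. -/
open MeasureTheory Filter Topology Function Matrix

noncomputable section

/-- If `a_M` is Lebesgue measurable on `Ω̃`, then its two-scale Continuous Extension
`a(x,y)` is Lebesgue measurable on `Ω × Y`. -/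
theorem statement12 {d : ℕ} (Ωt Ω : Set (Fin d → ℝ))
    (hΩt : MeasurableSet Ωt)
    (eb : ℝ) (heb : 0 < eb)
    (hW : ∀ x ∈ Ω, cube x eb ⊆ Ωt)
    (aM : (Fin d → ℝ) → ℝ)
    (hmeas : Measurable fun z : Ωt => aM z) :
    Measurable fun p : (Ω ×ˢ unitCube d : Set ((Fin d → ℝ) × (Fin d → ℝ))) =>
      contExt aM eb (p : (Fin d → ℝ) × (Fin d → ℝ)).1 (p : (Fin d → ℝ) × (Fin d → ℝ)).2 := by
  set F : (Fin d → ℝ) × (Fin d → ℝ) → (Fin d → ℝ) :=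
    fun p k => p.1 k + eb * (Int.fract (p.2 k - p.1 k / eb + 1/2) - 1/2) with hF
  have hFmeas : Measurable F := by
    refine measurable_pi_lambda _ fun k => ?_
    have h1 : Measurable fun p : (Fin d → ℝ) × (Fin d → ℝ) => p.1 k :=
      (measurable_pi_apply k).comp measurable_fst
    have h2 : Measurable fun p : (Fin d → ℝ) × (Fin d → ℝ) => p.2 k :=
      (measurable_pi_apply k).comp measurable_snd
    exact h1.add (measurable_const.mul
      (((h2.sub (h1.div_const eb)).add_const _).fract.sub_const _))
  have hrange : ∀ p : (Ω ×ˢ unitCube d : Set ((Fin d → ℝ) × (Fin d → ℝ))), F p ∈ Ωt := by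
    rintro ⟨p, hp, -⟩
    apply hW p.1 hp
    intro k
    simp only [hF, add_sub_cancel_left]
    have h0 := Int.fract_nonneg (p.2 k - p.1 k / eb + 1/2)
    have h1 := Int.fract_lt_one (p.2 k - p.1 k / eb + 1/2)
    rw [abs_mul, abs_of_pos heb]
    have : |Int.fract (p.2 k - p.1 k / eb + 1/2) - 1/2| ≤ 1/2 := by
      rw [abs_le]; constructor <;> linarith
    calc eb * |Int.fract (p.2 k - p.1 k / eb + 1/2) - 1/2| ≤ eb * (1/2) := by
          exact mul_le_mul_of_nonneg_left this heb.le
      _ = eb / 2 := by ring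
  have : (fun p : (Ω ×ˢ unitCube d : Set ((Fin d → ℝ) × (Fin d → ℝ))) =>
      contExt aM eb (p : (Fin d → ℝ) × (Fin d → ℝ)).1 (p : (Fin d → ℝ) × (Fin d → ℝ)).2)
      = (fun z : Ωt => aM z) ∘
        (fun p : (Ω ×ˢ unitCube d : Set ((Fin d → ℝ) × (Fin d → ℝ))) =>
          (⟨F p, hrange p⟩ : Ωt)) := rfl
  rw [this]
  exact hmeas.comp ((hFmeas.comp measurable_subtype_coe).subtype_mk)

end
end

section
/- Let a_M ∈ L¹(Ω̃) and a(x,y) be the two-scale discrete extension associated with a finite partition Ω̄ = ∪_{j=1}^N Ω̄_j with Ω_j ⊂ W_j (ε̄-cubes). Then for every ε > 0, a(·,·/ε) ∈ L¹(Ω) with ‖a(·,·/ε)‖_{L¹(Ω)} ≤ N ‖a_M‖_{L¹(Ω̃)} ((ε̄+2ε)/ε̄)^d. -/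
open MeasureTheory Filter Topology Function Matrix

noncomputable section

open scoped ENNReal NNReal

lemma measurableSet_cube {d : ℕ} (c : Fin d → ℝ) (r : ℝ) : MeasurableSet (cube c r) := by
  have : cube c r = ⋂ k, (fun z : Fin d → ℝ => |z k - c k|) ⁻¹' Set.Iic (r/2) := by
    ext z; simp [cube]
  rw [this]
  exact MeasurableSet.iInter fun k =>
    (measurable_abs.comp ((measurable_pi_apply k).sub_const _)) measurableSet_Iic

lemma lintegral_comp_affine {d : ℕ} (h : (Fin d → ℝ) → ℝ≥0∞) (hm : Measurable h)
    {r : ℝ} (hr : r ≠ 0) (b : Fin d → ℝ) :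
    ∫⁻ x, h (r • x + b) = ENNReal.ofReal |(r ^ d)⁻¹| * ∫⁻ y, h y := by
  calc ∫⁻ x, h (r • x + b)
      = ∫⁻ y, h (y + b) ∂(Measure.map (fun x : Fin d → ℝ => r • x) volume) := by
        rw [MeasureTheory.lintegral_map (f := fun y => h (y + b)) (hm.comp (measurable_add_const b)) (measurable_const_smul r)]
    _ = ENNReal.ofReal |(r ^ d)⁻¹| * ∫⁻ y, h (y + b) := by
        rw [show (fun x : Fin d → ℝ => r • x) = (r • ·) from rfl,
          Measure.map_addHaar_smul volume hr, lintegral_smul_measure]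
        congr 2
        simp [Module.finrank_fin_fun]
    _ = _ := by rw [lintegral_add_right_eq_self (fun y => h y) b]

lemma key {d : ℕ} {eb ε : ℝ} (heb : 0 < eb) (hε : 0 < ε) (c : Fin d → ℝ)
    {Ωt : Set (Fin d → ℝ)} (hWsub : cube c eb ⊆ Ωt)
    {aM : (Fin d → ℝ) → ℝ} (haM : IntegrableOn aM Ωt) :
    IntegrableOn (fun x => contExt aM eb c (ε⁻¹ • x)) (cube c eb) ∧
    ∫ x in cube c eb, |contExt aM eb c (ε⁻¹ • x)| ≤
      (∫ z in Ωt, |aM z|) * ((eb + 2 * ε) / eb) ^ d := by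
  set W := cube c eb with hWdef
  have hWm : MeasurableSet W := measurableSet_cube c eb
  have haMW : IntegrableOn aM W := haM.mono_set hWsub
  set aM' := haMW.1.mk aM with haM'def
  have hsm : StronglyMeasurable aM' := haMW.1.stronglyMeasurable_mk
  have hae : aM =ᵐ[volume.restrict W] aM' := haMW.1.ae_eq_mk
  -- the trace map
  set T : (Fin d → ℝ) → (Fin d → ℝ) :=
    fun x k => c k + eb * (Int.fract (ε⁻¹ * x k - c k / eb + 1/2) - 1/2) with hTdef
  have hcontExt : ∀ x, contExt aM eb c (ε⁻¹ • x) = aM (T x) := by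
    intro x; simp [contExt, hTdef, Pi.smul_apply, smul_eq_mul]
  have hTmem : ∀ x, T x ∈ W := by
    intro x k
    have h0 : (0:ℝ) ≤ Int.fract (ε⁻¹ * x k - c k / eb + 1/2) := Int.fract_nonneg _
    have h1 : Int.fract (ε⁻¹ * x k - c k / eb + 1/2) < 1 := Int.fract_lt_one _
    have : |Int.fract (ε⁻¹ * x k - c k / eb + 1/2) - 1/2| ≤ 1/2 := by
      rw [abs_le]; constructor <;> linarith
    have := mul_le_mul_of_nonneg_left this heb.le
    calc |T x k - c k| = |eb * (Int.fract (ε⁻¹ * x k - c k / eb + 1/2) - 1/2)| := by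
          rw [show T x k - c k = eb * (Int.fract (ε⁻¹ * x k - c k / eb + 1/2) - 1/2) by
            simp [hTdef]]
      _ = |eb| * |Int.fract (ε⁻¹ * x k - c k / eb + 1/2) - 1/2| := abs_mul _ _
      _ ≤ eb / 2 := by rw [abs_of_pos heb]; linarith
  -- floor data
  set u : (Fin d → ℝ) → Fin d → ℝ := fun x k => ε⁻¹ * x k - c k / eb + 1/2 with hudef
  set M : (Fin d → ℝ) → Fin d → ℤ := fun x k => ⌊u x k⌋ with hMdef
  set r : ℝ := eb / ε with hrdef
  have hrpos : 0 < r := div_pos heb hε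
  have hr : r ≠ 0 := hrpos.ne'
  set b : (Fin d → ℤ) → Fin d → ℝ := fun m k => -(eb * m k) with hbdef
  have hTeq : ∀ x, T x = r • x + b (M x) := by
    intro x; funext k
    have : Int.fract (u x k) = u x k - ⌊u x k⌋ := rfl
    simp only [hTdef, Pi.add_apply, Pi.smul_apply, smul_eq_mul, hbdef, hMdef, this, hudef, hrdef]
    rw [Int.fract]
    field_simp
    ring
  -- the index box
  set lo : Fin d → ℤ := fun k => ⌊ε⁻¹ * (c k - eb/2) - c k / eb + 1/2⌋ with hlodef
  set hi : Fin d → ℤ := fun k => ⌊ε⁻¹ * (c k + eb/2) - c k / eb + 1/2⌋ with hhidef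
  set box : Finset (Fin d → ℤ) := Fintype.piFinset fun k => Finset.Icc (lo k) (hi k) with hboxdef
  have hMbox : ∀ x ∈ W, M x ∈ box := by
    intro x hx
    rw [hboxdef, Fintype.mem_piFinset]
    intro k
    have hxk := hx k
    rw [abs_le] at hxk
    have hl : c k - eb/2 ≤ x k := by linarith [hxk.1]
    have hh : x k ≤ c k + eb/2 := by linarith [hxk.2]
    have hεinv : (0:ℝ) < ε⁻¹ := inv_pos.2 hε
    rw [Finset.mem_Icc]
    simp only [hMdef, hudef, hlodef, hhidef]
    have hml := mul_le_mul_of_nonneg_left hl hεinv.le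
    have hmh := mul_le_mul_of_nonneg_left hh hεinv.le
    constructor
    · exact Int.floor_le_floor (by linarith)
    · exact Int.floor_le_floor (by linarith)
  -- measurability
  have hum : ∀ k, Measurable fun x : Fin d → ℝ => u x k := by
    intro k
    show Measurable fun x : Fin d → ℝ => ε⁻¹ * x k - c k / eb + 1/2
    have hk : Measurable fun x : Fin d → ℝ => x k := measurable_pi_apply k
    exact ((hk.const_mul ε⁻¹).sub_const _).add_const _
  have hTm : Measurable T := by
    refine measurable_pi_lambda _ fun k => ?_
    show Measurable fun x : Fin d → ℝ => c k + eb * (Int.fract (ε⁻¹ * x k - c k / eb + 1/2) - 1/2)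
    exact (((measurable_fract.comp (hum k)).sub_const _).const_mul eb).const_add _
  have hpiece : ∀ m : Fin d → ℤ, MeasurableSet {x : Fin d → ℝ | M x = m} := by
    intro m
    have : {x : Fin d → ℝ | M x = m} = ⋂ k, (fun x => ⌊u x k⌋) ⁻¹' {m k} := by
      ext x; simp [hMdef, funext_iff]
    rw [this]
    exact MeasurableSet.iInter fun k =>
      (Int.measurable_floor.comp (hum k)) (measurableSet_singleton _)
  -- the dominating function
  set H : (Fin d → ℝ) → ℝ≥0∞ := W.indicator (fun z => (‖aM' z‖₊ : ℝ≥0∞)) with hHdef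
  have hHm : Measurable H := (hsm.measurable.nnnorm.coe_nnreal_ennreal).indicator hWm
  set G : (Fin d → ℤ) → (Fin d → ℝ) → ℝ≥0∞ :=
    fun m => {x : Fin d → ℝ | M x = m}.indicator (fun x => H (r • x + b m)) with hGdef
  have hGm : ∀ m, Measurable (G m) := by
    intro m
    exact (hHm.comp ((measurable_const_smul r).add_const (b m))).indicator (hpiece m)
  have hpointwise : ∀ x ∈ W, (‖aM' (T x)‖₊ : ℝ≥0∞) ≤ ∑ m ∈ box, G m x := by
    intro x hx
    have hmem : x ∈ {y : Fin d → ℝ | M y = M x} := rfl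
    have h1 : G (M x) x = (‖aM' (T x)‖₊ : ℝ≥0∞) := by
      rw [hGdef]
      simp only [Set.indicator_of_mem hmem]
      rw [← hTeq x, hHdef, Set.indicator_of_mem (hTmem x)]
    calc (‖aM' (T x)‖₊ : ℝ≥0∞) = G (M x) x := h1.symm
      _ ≤ ∑ m ∈ box, G m x :=
        Finset.single_le_sum (f := fun m => G m x) (fun m _ => zero_le) (hMbox x hx)
  -- lintegral estimates
  set K : ℝ≥0∞ := ∫⁻ z in Ωt, ‖aM z‖₊ with hKdef
  have hKfin : K ≠ ⊤ := haM.2.ne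
  have hKW : (∫⁻ z in W, ‖aM' z‖₊) ≤ K := by
    have h1 : (∫⁻ z in W, ‖aM' z‖₊) = ∫⁻ z in W, ‖aM z‖₊ := by
      refine lintegral_congr_ae ?_
      exact (hae.symm.fun_comp fun t => ((‖t‖₊ : ℝ≥0∞)))
    rw [h1]
    exact lintegral_mono' (Measure.restrict_mono hWsub le_rfl) le_rfl
  have hGint : ∀ m, (∫⁻ x, G m x) ≤ ENNReal.ofReal |(r ^ d)⁻¹| * ∫⁻ z in W, ‖aM' z‖₊ := by
    intro m
    calc (∫⁻ x, G m x) ≤ ∫⁻ x, H (r • x + b m) :=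
          lintegral_mono (fun x => Set.indicator_le_self _ _ x)
      _ = ENNReal.ofReal |(r ^ d)⁻¹| * ∫⁻ y, H y :=
          lintegral_comp_affine H hHm hr (b m)
      _ = ENNReal.ofReal |(r ^ d)⁻¹| * ∫⁻ z in W, ‖aM' z‖₊ := by
          rw [hHdef, lintegral_indicator hWm]
  have hmain : (∫⁻ x in W, ‖aM' (T x)‖₊) ≤
      (box.card : ℝ≥0∞) * (ENNReal.ofReal |(r ^ d)⁻¹| * K) := by
    calc (∫⁻ x in W, ‖aM' (T x)‖₊)
        ≤ ∫⁻ x in W, ∑ m ∈ box, G m x := by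
          refine setLIntegral_mono (Finset.measurable_sum _ fun m _ => hGm m) hpointwise
      _ ≤ ∫⁻ x, ∑ m ∈ box, G m x := setLIntegral_le_lintegral _ _
      _ = ∑ m ∈ box, ∫⁻ x, G m x := lintegral_finset_sum _ fun m _ => hGm m
      _ ≤ ∑ _m ∈ box, ENNReal.ofReal |(r ^ d)⁻¹| * K := by
          refine Finset.sum_le_sum fun m _ => ?_
          exact le_trans (hGint m) (mul_le_mul_right hKW _)
      _ = (box.card : ℝ≥0∞) * (ENNReal.ofReal |(r ^ d)⁻¹| * K) := by
          rw [Finset.sum_const, nsmul_eq_mul]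
  -- counting the box
  have hcount : (box.card : ℝ≥0∞) * ENNReal.ofReal |(r ^ d)⁻¹| ≤
      ENNReal.ofReal (((eb + 2*ε)/eb) ^ d) := by
    have hcard : box.card = ∏ k, (Finset.Icc (lo k) (hi k)).card := by
      rw [hboxdef, Fintype.card_piFinset]
    have hk : ∀ k, (((Finset.Icc (lo k) (hi k)).card : ℝ)) ≤ (eb + 2*ε)/ε := by
      intro k
      rw [Int.card_Icc]
      have h1 : (hi k : ℝ) ≤ ε⁻¹ * (c k + eb/2) - c k / eb + 1/2 := Int.floor_le _
      have h2 : ε⁻¹ * (c k - eb/2) - c k / eb + 1/2 - 1 < (lo k : ℝ) := Int.sub_one_lt_floor _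
      have hb : ((hi k + 1 - lo k : ℤ) : ℝ) ≤ (eb + 2*ε)/ε := by
        push_cast
        have h3 : ε⁻¹ * (c k + eb/2) - ε⁻¹ * (c k - eb/2) = eb/ε := by field_simp; ring
        have h4 : (eb + 2*ε)/ε = eb/ε + 2 := by field_simp
        rw [h4]
        linarith
      rcases le_or_gt (hi k + 1 - lo k) 0 with h | h
      · rw [Int.toNat_of_nonpos h]
        have : (0:ℝ) ≤ (eb + 2*ε)/ε := by positivity
        simpa using this
      · rw [← Int.toNat_of_nonneg h.le] at hb
        exact_mod_cast hb
    have habs : |(r ^ d)⁻¹| = (ε/eb) ^ d := by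
      rw [abs_of_pos (by positivity), hrdef]
      rw [← inv_pow, inv_div]
    rw [habs]
    have hcast : (box.card : ℝ≥0∞) = ∏ k, (((Finset.Icc (lo k) (hi k)).card : ℝ≥0∞)) := by
      rw [hcard]; push_cast; ring
    rw [hcast]
    have hpk : ∀ k : Fin d, (((Finset.Icc (lo k) (hi k)).card : ℝ≥0∞)) ≤
        ENNReal.ofReal ((eb + 2*ε)/ε) := by
      intro k
      rw [← ENNReal.ofReal_natCast]
      exact ENNReal.ofReal_le_ofReal (hk k)
    calc (∏ k, (((Finset.Icc (lo k) (hi k)).card : ℝ≥0∞))) * ENNReal.ofReal ((ε/eb) ^ d)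
        ≤ (∏ _k : Fin d, ENNReal.ofReal ((eb + 2*ε)/ε)) * ENNReal.ofReal ((ε/eb) ^ d) := by
          exact mul_le_mul_left (Finset.prod_le_prod' fun k _ => hpk k) _
      _ = ENNReal.ofReal (((eb + 2*ε)/ε) ^ d) * ENNReal.ofReal ((ε/eb) ^ d) := by
          rw [Finset.prod_const, Finset.card_univ, Fintype.card_fin,
            ← ENNReal.ofReal_pow (by positivity)]
      _ = ENNReal.ofReal (((eb + 2*ε)/ε) ^ d * (ε/eb) ^ d) := by
          rw [ENNReal.ofReal_mul (by positivity)]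
      _ = ENNReal.ofReal (((eb + 2*ε)/eb) ^ d) := by
          have hq : ((eb + 2*ε)/ε) * (ε/eb) = (eb + 2*ε)/eb := by
            field_simp
          rw [← mul_pow, hq]
  have hfinal : (∫⁻ x in W, ‖aM' (T x)‖₊) ≤ ENNReal.ofReal (((eb + 2*ε)/eb) ^ d) * K := by
    refine le_trans hmain ?_
    rw [← mul_assoc]
    exact mul_le_mul_left hcount K
  -- a.e. equality of aM ∘ T and aM' ∘ T on W
  have hZ : volume ({z | aM z ≠ aM' z} ∩ W) = 0 := by
    have := ae_iff.mp hae
    rwa [Measure.restrict_apply' hWm] at this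
  have hgg' : (fun x => aM (T x)) =ᵐ[volume.restrict W] fun x => aM' (T x) := by
    rw [Filter.EventuallyEq, ae_iff, Measure.restrict_apply' hWm]
    set U : Set (Fin d → ℝ) :=
      ⋃ m : Fin d → ℤ, (fun y : Fin d → ℝ => r • y + b m) ⁻¹' ({z | aM z ≠ aM' z} ∩ W) with hUdef
    have hsub : {a | ¬aM (T a) = aM' (T a)} ∩ W ⊆ U := by
      rintro x ⟨hx1, hx2⟩
      refine Set.mem_iUnion.2 ⟨M x, ?_⟩
      have hTx : r • x + b (M x) = T x := (hTeq x).symm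
      simp only [Set.mem_preimage, hTx]
      exact ⟨hx1, hTmem x⟩
    have hU0 : volume U = 0 := by
      refine measure_iUnion_null fun m : Fin d → ℤ => ?_
      have heq : (fun y : Fin d → ℝ => r • y + b m) ⁻¹' ({z | aM z ≠ aM' z} ∩ W) =
          (r • ·) ⁻¹' ((· + b m) ⁻¹' ({z | aM z ≠ aM' z} ∩ W)) := rfl
      rw [heq, Measure.addHaar_preimage_smul volume hr, measure_preimage_add_right,
        hZ, mul_zero]
    exact measure_mono_null hsub hU0
  have haesm : AEStronglyMeasurable (fun x => aM (T x)) (volume.restrict W) :=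
    (hsm.comp_measurable hTm).aestronglyMeasurable.congr hgg'.symm
  have hlint_eq : (∫⁻ x in W, ‖aM (T x)‖₊) = ∫⁻ x in W, ‖aM' (T x)‖₊ :=
    lintegral_congr_ae (hgg'.fun_comp fun t => ((‖t‖₊ : ℝ≥0∞)))
  have hint : IntegrableOn (fun x => aM (T x)) W := by
    refine ⟨haesm, ?_⟩
    show (∫⁻ x in W, ‖aM (T x)‖₊) < ⊤
    rw [hlint_eq]
    exact lt_of_le_of_lt hfinal (ENNReal.mul_lt_top ENNReal.ofReal_lt_top hKfin.lt_top)
  have hfun : (fun x => contExt aM eb c (ε⁻¹ • x)) = fun x => aM (T x) := funext hcontExt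
  rw [hfun]
  refine ⟨hint, ?_⟩
  have hR0 : (0:ℝ) ≤ ((eb + 2*ε)/eb) ^ d := by positivity
  have h1 : ∫ x in W, |aM (T x)| = (∫⁻ x in W, ‖aM (T x)‖₊).toReal := by
    simp only [← enorm_eq_nnnorm]
    rw [← integral_norm_eq_lintegral_enorm haesm]
    simp only [Real.norm_eq_abs]
  have h2 : ∫ z in Ωt, |aM z| = K.toReal := by
    rw [hKdef]
    simp only [← enorm_eq_nnnorm]
    rw [← integral_norm_eq_lintegral_enorm haM.1]
    simp only [Real.norm_eq_abs]
  have hne : ENNReal.ofReal (((eb + 2*ε)/eb) ^ d) * K ≠ ⊤ :=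
    ENNReal.mul_ne_top ENNReal.ofReal_ne_top hKfin
  calc ∫ x in W, |aM (T x)| = (∫⁻ x in W, ‖aM (T x)‖₊).toReal := h1
    _ ≤ (ENNReal.ofReal (((eb + 2*ε)/eb) ^ d) * K).toReal := by
        refine ENNReal.toReal_mono hne ?_
        rw [hlint_eq]
        exact hfinal
    _ = ((eb + 2*ε)/eb) ^ d * K.toReal := by
        rw [ENNReal.toReal_mul, ENNReal.toReal_ofReal hR0]
    _ = (∫ z in Ωt, |aM z|) * ((eb + 2*ε)/eb) ^ d := by
        rw [h2]; ring


/-- For `a_M ∈ L¹(Ω̃)` and the two-scale Discrete Extension `a` associated to a finite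
partition `Ω̄ = ⋃_{j} Ω̄_j` with `Ω_j ⊆ W_j` (`ε̄`-cubes): for every `ε > 0`, the trace
`x ↦ a(x, x/ε)` is in `L¹(Ω)` with `‖a(·,·/ε)‖_{L¹(Ω)} ≤ N ‖a_M‖_{L¹(Ω̃)} ((ε̄+2ε)/ε̄)^d`. -/
theorem statement14 {d : ℕ} (Ωt Ω : Set (Fin d → ℝ))
    (hΩt : Bornology.IsBounded Ωt) (hΩb : Bornology.IsBounded Ω)
    (N : ℕ) (Ωp : Fin N → Set (Fin d → ℝ)) (xh : Fin N → (Fin d → ℝ))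
    (hmeas : ∀ j, MeasurableSet (Ωp j))
    (hdisj : Pairwise (Function.onFun Disjoint Ωp))
    (hpart : closure Ω = ⋃ j, closure (Ωp j))
    (hsub : ∀ j, Ωp j ⊆ Ω)
    (eb : ℝ) (heb : 0 < eb)
    (hcube : ∀ j, Ωp j ⊆ cube (xh j) eb)
    (hWsub : ∀ j, cube (xh j) eb ⊆ Ωt)
    (aM : (Fin d → ℝ) → ℝ) (haM : IntegrableOn aM Ωt)
    (ε : ℝ) (hε : 0 < ε) :
    IntegrableOn (fun x => discExt aM eb Ωp xh x (ε⁻¹ • x)) Ω ∧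
    ∫ x in Ω, |discExt aM eb Ωp xh x (ε⁻¹ • x)| ≤
      N * (∫ z in Ωt, |aM z|) * ((eb + 2 * ε) / eb) ^ d := by

  have hpt : ∀ x, discExt aM eb Ωp xh x (ε⁻¹ • x) =
      ∑ j, (Ωp j).indicator (fun y => contExt aM eb (xh j) (ε⁻¹ • y)) x := by
    intro x
    simp only [discExt]
    refine Finset.sum_congr rfl fun j _ => ?_
    by_cases hx : x ∈ Ωp j
    · rw [Set.indicator_of_mem hx, Set.indicator_of_mem hx]
    · rw [Set.indicator_of_notMem hx, Set.indicator_of_notMem hx]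
  have hkey := fun j => key heb hε (xh j) (hWsub j) haM
  have hint : ∀ j, IntegrableOn (fun y => contExt aM eb (xh j) (ε⁻¹ • y)) (Ωp j) :=
    fun j => ((hkey j).1).mono_set (hcube j)
  have hindint : ∀ j,
      Integrable ((Ωp j).indicator fun y => contExt aM eb (xh j) (ε⁻¹ • y)) volume :=
    fun j => (hint j).integrable_indicator (hmeas j)
  have hindabs : ∀ j,
      Integrable ((Ωp j).indicator fun y => |contExt aM eb (xh j) (ε⁻¹ • y)|) volume := by
    intro j
    have : IntegrableOn (fun y => |contExt aM eb (xh j) (ε⁻¹ • y)|) (Ωp j) := (hint j).abs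
    exact this.integrable_indicator (hmeas j)
  have hsumint : IntegrableOn
      (fun x => ∑ j, (Ωp j).indicator (fun y => contExt aM eb (xh j) (ε⁻¹ • y)) x) Ω :=
    (integrable_finset_sum _ fun j _ => hindint j).integrableOn
  constructor
  · have : (fun x => discExt aM eb Ωp xh x (ε⁻¹ • x)) =
        fun x => ∑ j, (Ωp j).indicator (fun y => contExt aM eb (xh j) (ε⁻¹ • y)) x :=
      funext hpt
    rw [this]
    exact hsumint
  · set B : ℝ := (∫ z in Ωt, |aM z|) * ((eb + 2 * ε) / eb) ^ d with hBdef
    have hperj : ∀ j : Fin N,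
        ∫ x in Ω, (Ωp j).indicator (fun y => |contExt aM eb (xh j) (ε⁻¹ • y)|) x ≤ B := by
      intro j
      rw [setIntegral_indicator (hmeas j), Set.inter_eq_self_of_subset_right (hsub j)]
      refine le_trans ?_ (hkey j).2
      refine setIntegral_mono_set (hkey j).1.abs
        (Filter.Eventually.of_forall fun x => abs_nonneg _)
        (HasSubset.Subset.eventuallyLE (hcube j))
    calc ∫ x in Ω, |discExt aM eb Ωp xh x (ε⁻¹ • x)|
        ≤ ∫ x in Ω, ∑ j, (Ωp j).indicator (fun y => |contExt aM eb (xh j) (ε⁻¹ • y)|) x := by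
          refine integral_mono hsumint.abs
            (integrable_finset_sum _ fun j _ => (hindabs j)).integrableOn ?_
          · intro x
            simp only [hpt]
            refine le_trans (Finset.abs_sum_le_sum_abs _ _) ?_
            refine Finset.sum_le_sum fun j _ => ?_
            by_cases hx : x ∈ Ωp j
            · rw [Set.indicator_of_mem hx, Set.indicator_of_mem hx]
            · rw [Set.indicator_of_notMem hx, Set.indicator_of_notMem hx, abs_zero]
      _ = ∑ j, ∫ x in Ω, (Ωp j).indicator (fun y => |contExt aM eb (xh j) (ε⁻¹ • y)|) x :=
          integral_finset_sum _ fun j _ => (hindabs j).integrableOn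
      _ ≤ ∑ _j : Fin N, B := Finset.sum_le_sum fun j _ => hperj j
      _ = N * B := by rw [Finset.sum_const, Finset.card_univ, Fintype.card_fin, nsmul_eq_mul]
      _ = N * (∫ z in Ωt, |aM z|) * ((eb + 2 * ε) / eb) ^ d := by rw [hBdef, mul_assoc]


end
end
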